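/- arXiv:1312.3631 — 3 statements merged into one kernel-verified Lean document; each statement's English description precedes it below -/
import Mathlib

section
/- Let (L,K,S1,S2) be jointly distributed finite random variables with joint distribution factoring as p(l,k,s1,s2) = p(l,s1)·p(k,s2), and let f : S1 × S2 → ℝ be a function with H(f(S1,S2) | L, K) = 0. Define the conditional characteristic graph G_{L|K} on vertex set 𝓛 where l1 and l2 are adjacent iff there exist (s1,s2), (s1',s2') and k with p(l1,k,s1,s2)·p(l2,k,s1',s2') > 0 and f(s1,s2) ≠ f(s1',s2'). Then the collection of maximal independent sets of G_{L|K} forms a partition of 𝓛: every l ∈ 𝓛 with positive probability lies in exactly one maximal independent set. -/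
/-- Lemma 1 (partition lemma): if the joint distribution factors as
`p(l,k,s1,s2) = pLS1(l,s1) * pKS2(k,s2)` and `f(S1,S2)` is determined by `(L,K)`,
then the maximal independent sets of the conditional characteristic graph
`G_{L|K}` partition the (positive-probability) vertices: each such `l` lies in
exactly one maximal independent set. -/
theorem stmt0 {L K S1 S2 : Type} [Fintype L] [Fintype K] [Fintype S1] [Fintype S2]
    (p : L → K → S1 → S2 → ℝ)
    (pLS1 : L → S1 → ℝ) (pKS2 : K → S2 → ℝ)
    (hnn : ∀ l k s1 s2, 0 ≤ p l k s1 s2)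
    (hsum : ∑ l, ∑ k, ∑ s1, ∑ s2, p l k s1 s2 = 1)
    (hfact : ∀ l k s1 s2, p l k s1 s2 = pLS1 l s1 * pKS2 k s2)
    (f : S1 → S2 → ℝ)
    -- H(f(S1,S2) | L, K) = 0 : the value of f is determined by (L,K) on the support
    (hdet : ∀ l k s1 s2 s1' s2', 0 < p l k s1 s2 → 0 < p l k s1' s2' →
      f s1 s2 = f s1' s2')
    -- the conditional characteristic graph G_{L|K}
    (Adj : L → L → Prop)
    (hAdj : ∀ l1 l2, Adj l1 l2 ↔ ∃ k s1 s2 s1' s2',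
      0 < p l1 k s1 s2 * p l2 k s1' s2' ∧ f s1 s2 ≠ f s1' s2')
    (IsIndep : Set L → Prop)
    (hIndep : ∀ w, IsIndep w ↔ ∀ l1 ∈ w, ∀ l2 ∈ w, ¬ Adj l1 l2)
    (IsMaxIndep : Set L → Prop)
    (hMax : ∀ w, IsMaxIndep w ↔ IsIndep w ∧ ∀ w', IsIndep w' → w ⊆ w' → w = w') :
    ∀ l : L, 0 < ∑ k, ∑ s1, ∑ s2, p l k s1 s2 →
      ∃! w : Set L, IsMaxIndep w ∧ l ∈ w := by
  -- split a positive product of nonneg terms into two positive factors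
  have split : ∀ l1 l2 k s1 s2 s1' s2', 0 < p l1 k s1 s2 * p l2 k s1' s2' →
      0 < p l1 k s1 s2 ∧ 0 < p l2 k s1' s2' := by
    intro l1 l2 k s1 s2 s1' s2' h
    rcases mul_pos_iff.mp h with ⟨h1, h2⟩ | ⟨h1, _⟩
    · exact ⟨h1, h2⟩
    · exact absurd h1 (not_lt.mpr (hnn _ _ _ _))
  -- irreflexivity
  have hrefl : ∀ x : L, ¬ Adj x x := by
    intro x hx
    rw [hAdj] at hx
    obtain ⟨k, s1, s2, s1', s2', hpp, hne⟩ := hx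
    obtain ⟨h1, h2⟩ := split _ _ _ _ _ _ _ hpp
    exact hne (hdet x k s1 s2 s1' s2' h1 h2)
  -- symmetry
  have hsymm : ∀ a b : L, ¬ Adj a b → ¬ Adj b a := by
    intro a b hab hba
    rw [hAdj] at hba
    obtain ⟨k, s1, s2, s1', s2', hpp, hne⟩ := hba
    obtain ⟨h1, h2⟩ := split _ _ _ _ _ _ _ hpp
    exact hab ((hAdj a b).mpr ⟨k, s1', s2', s1, s2, mul_pos h2 h1, hne.symm⟩)
  -- non-adjacency is transitive through a positive-probability vertex
  have key : ∀ l1 l2 l3 : L, (∃ k s1 s2, 0 < p l2 k s1 s2) →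
      ¬ Adj l1 l2 → ¬ Adj l2 l3 → ¬ Adj l1 l3 := by
    intro l1 l2 l3 hpos2 h12 h23 h13
    obtain ⟨k0, t1, t2, ht⟩ := hpos2
    rw [hAdj] at h13
    obtain ⟨k, s1, s2, s1', s2', hpp, hne⟩ := h13
    obtain ⟨h1, h3⟩ := split _ _ _ _ _ _ _ hpp
    -- pLS1 l2 t1 ≠ 0
    have hL2 : pLS1 l2 t1 ≠ 0 := by
      have := ht.ne'
      rw [hfact] at this
      exact left_ne_zero_of_mul this
    have hm : 0 < p l2 k t1 s2 := by
      have hK : pKS2 k s2 ≠ 0 := by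
        have := h1.ne'
        rw [hfact] at this
        exact right_ne_zero_of_mul this
      rcases (hnn l2 k t1 s2).lt_or_eq with h | h
      · exact h
      · exfalso
        have := h.symm
        rw [hfact] at this
        exact (mul_ne_zero hL2 hK) this
    have hm' : 0 < p l2 k t1 s2' := by
      have hK : pKS2 k s2' ≠ 0 := by
        have := h3.ne'
        rw [hfact] at this
        exact right_ne_zero_of_mul this
      rcases (hnn l2 k t1 s2').lt_or_eq with h | h
      · exact h
      · exfalso
        have := h.symm
        rw [hfact] at this
        exact (mul_ne_zero hL2 hK) this
    have e1 : f s1 s2 = f t1 s2 := by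
      by_contra hc
      exact h12 ((hAdj l1 l2).mpr ⟨k, s1, s2, t1, s2, mul_pos h1 hm, hc⟩)
    have e2 : f t1 s2 = f t1 s2' := hdet l2 k t1 s2 t1 s2' hm hm'
    have e3 : f t1 s2' = f s1' s2' := by
      by_contra hc
      exact h23 ((hAdj l2 l3).mpr ⟨k, t1, s2', s1', s2', mul_pos hm' h3, hc⟩)
    exact hne (e1.trans (e2.trans e3))
  intro l hl
  -- extract a positive term for l
  have hpos : ∃ k s1 s2, 0 < p l k s1 s2 := by
    by_contra hc
    push_neg at hc
    have hz : ∑ k, ∑ s1, ∑ s2, p l k s1 s2 = 0 := by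
      apply Finset.sum_eq_zero; intro k _
      apply Finset.sum_eq_zero; intro s1 _
      apply Finset.sum_eq_zero; intro s2 _
      exact le_antisymm (hc k s1 s2) (hnn l k s1 s2)
    rw [hz] at hl
    exact lt_irrefl 0 hl
  set W : Set L := {x | ¬ Adj l x} with hW
  have hlW : l ∈ W := hrefl l
  have hWind : IsIndep W := by
    rw [hIndep]
    intro a ha b hb
    exact key a l b hpos (hsymm l a ha) hb
  have hWmax : IsMaxIndep W := by
    rw [hMax]
    refine ⟨hWind, ?_⟩
    intro w' hw' hsub
    apply Set.Subset.antisymm hsub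
    intro x hx
    exact (hIndep w').mp hw' l (hsub hlW) x hx
  refine ⟨W, ⟨hWmax, hlW⟩, ?_⟩
  rintro w ⟨hw, hlw⟩
  rw [hMax] at hw
  obtain ⟨hwi, hwmax⟩ := hw
  have hsub : w ⊆ W := fun x hx => (hIndep w).mp hwi l hlw x hx
  exact hwmax W hWind hsub
end

section
/- Non-adjacency transfer in characteristic graphs: let sources X_V on a rooted directed tree satisfy the Markov Property, and let W_{Roots(k)} satisfy X_{Child(k)} − X_{Child(k)^c} − W_{Roots(k)}. Suppose vertices (x_{Child(k)∖{k}}, x_k) and (x'_{Child(k)∖{k}}, x_k) of G := G_{X_{Child(k)} | X_{Sup(k)}, W_{Roots(k)}} are non-adjacent, both have positive probability, and x''_{Child(k)} has positive probability. Then (x_{Child(k)∖{k}}, x_k) is adjacent to x''_{Child(k)} in G if and only if (x'_{Child(k)∖{k}}, x_k) is adjacent to x''_{Child(k)} in G. -/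
open Finset

section NonAdjTransfer

variable {V : Type} [Fintype V] [DecidableEq V]
variable (X : V → Type) [∀ v, Fintype (X v)] [∀ v, DecidableEq (X v)]
variable (W : V → Type) [∀ v, Fintype (W v)] [∀ v, DecidableEq (W v)]
variable {F : Type} (f : (∀ v, X v) → F)
variable (q : (∀ v, X v) → (∀ v, W v) → ℝ)

/-- Adjacency in `G_{X_C | X_S, W_Rt}`. -/
def Adj1 (C S Rt : Finset V) (a a' : ∀ v : {v // v ∈ C}, X v) : Prop :=
  ∃ (x x' : ∀ v, X v) (w w' : ∀ v, W v),
    (∀ v, (h : v ∈ C) → x v = a ⟨v, h⟩) ∧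
    (∀ v, (h : v ∈ C) → x' v = a' ⟨v, h⟩) ∧
    (∀ v ∈ S, x v = x' v) ∧ (∀ v ∈ Rt, w v = w' v) ∧
    0 < q x w ∧ 0 < q x' w' ∧ f x ≠ f x'

/-- Marginal probability of `X_C = a`. -/
noncomputable def pC (C : Finset V) (a : ∀ v : {v // v ∈ C}, X v) : ℝ :=
  ∑ x : ∀ v, X v, ∑ w : ∀ v, W v,
    if ∀ v, (h : v ∈ C) → x v = a ⟨v, h⟩ then q x w else 0

-- swap lemma
lemma adj1_swap {C S Rt : Finset V} {a b : ∀ v : {v // v ∈ C}, X v}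
    (h : Adj1 X W f q C S Rt a b) : Adj1 X W f q C S Rt b a := by
  obtain ⟨x, x', w, w', h1, h2, h3, h4, h5, h6, h7⟩ := h
  exact ⟨x', x, w', w, h2, h1, fun v hv => (h3 v hv).symm,
    fun v hv => (h4 v hv).symm, h6, h5, h7.symm⟩

section aux
variable (hnn : ∀ x w, 0 ≤ q x w)
variable (qm : Finset V → Finset V → (∀ v, X v) → (∀ v, W v) → ℝ)
variable (hqm : ∀ A B x w, qm A B x w =
      ∑ y : ∀ v, X v, ∑ z : ∀ v, W v,
        if (∀ v ∈ A, y v = x v) ∧ (∀ v ∈ B, z v = w v) then q y z else 0)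

include hnn hqm

lemma qm_nonneg (A B : Finset V) (x : ∀ v, X v) (w : ∀ v, W v) :
    0 ≤ qm A B x w := by
  rw [hqm]
  apply Finset.sum_nonneg; intro y _
  apply Finset.sum_nonneg; intro z _
  split_ifs with h
  · exact hnn y z
  · exact le_refl 0

lemma qm_pos_of_witness {A B : Finset V} {x : ∀ v, X v} {w : ∀ v, W v}
    {y : ∀ v, X v} {z : ∀ v, W v}
    (hy : ∀ v ∈ A, y v = x v) (hz : ∀ v ∈ B, z v = w v) (hq : 0 < q y z) :
    0 < qm A B x w := by
  rw [hqm]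
  refine lt_of_lt_of_le hq ?_
  have h1 : q y z ≤ ∑ z' : ∀ v, W v,
      if (∀ v ∈ A, y v = x v) ∧ (∀ v ∈ B, z' v = w v) then q y z' else 0 := by
    have h2 : q y z =
        if (∀ v ∈ A, y v = x v) ∧ (∀ v ∈ B, z v = w v) then q y z else 0 :=
      (if_pos ⟨hy, hz⟩).symm
    rw [h2]
    exact Finset.single_le_sum
      (f := fun z' : ∀ v, W v =>
        if (∀ v ∈ A, y v = x v) ∧ (∀ v ∈ B, z' v = w v) then q y z' else 0)
      (fun i _ => by
        show (0:ℝ) ≤ if (∀ v ∈ A, y v = x v) ∧ (∀ v ∈ B, i v = w v) then q y i else 0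
        split_ifs with h; exacts [hnn y i, le_refl 0])
      (Finset.mem_univ z)
  refine le_trans h1 ?_
  exact Finset.single_le_sum
    (f := fun y' : ∀ v, X v => ∑ z' : ∀ v, W v,
      if (∀ v ∈ A, y' v = x v) ∧ (∀ v ∈ B, z' v = w v) then q y' z' else 0)
    (fun i _ => Finset.sum_nonneg fun j _ => by
      show (0:ℝ) ≤ if (∀ v ∈ A, i v = x v) ∧ (∀ v ∈ B, j v = w v) then q i j else 0
      split_ifs with h; exacts [hnn i j, le_refl 0])
    (Finset.mem_univ y)

lemma exists_witness_of_qm_pos {A B : Finset V} {x : ∀ v, X v} {w : ∀ v, W v}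
    (h : 0 < qm A B x w) :
    ∃ y z, (∀ v ∈ A, y v = x v) ∧ (∀ v ∈ B, z v = w v) ∧ 0 < q y z := by
  rw [hqm] at h
  by_contra hc
  push_neg at hc
  refine absurd h (not_lt.mpr ?_)
  apply Finset.sum_nonpos; intro y _
  apply Finset.sum_nonpos; intro z _
  split_ifs with hcond
  · exact hc y z hcond.1 hcond.2
  · exact le_refl 0

end aux

lemma exists_witness_of_pC_pos (hnn : ∀ x w, 0 ≤ q x w)
    {C : Finset V} {a : ∀ v : {v // v ∈ C}, X v}
    (h : 0 < pC X W q C a) :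
    ∃ y z, (∀ v, (hv : v ∈ C) → y v = a ⟨v, hv⟩) ∧ 0 < q y z := by
  unfold pC at h
  by_contra hc
  push_neg at hc
  refine absurd h (not_lt.mpr ?_)
  apply Finset.sum_nonpos; intro y _
  apply Finset.sum_nonpos; intro z _
  split_ifs with hcond
  · exact hc y z hcond
  · exact le_refl 0

-- tree lemmas
lemma child_ord {r : V} {out : V → V} (hroot : out r = r)
    (O : V ≃ Fin (Fintype.card V))
    (hO : ∀ u, u ≠ r → (O u : ℕ) < (O (out u) : ℕ))
    {k : V} : ∀ (n : ℕ) (v : V), out^[n] v = k → (O v : ℕ) ≤ (O k : ℕ) := by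
  intro n
  induction n with
  | zero => intro v hv; simp at hv; subst hv; exact le_refl _
  | succ n ih =>
    intro v hv
    by_cases hvr : v = r
    · subst hvr
      rw [Function.iterate_fixed hroot] at hv
      subst hv; exact le_refl _
    · have h1 : (O v : ℕ) < (O (out v) : ℕ) := hO v hvr
      have h2 : out^[n] (out v) = k := by
        rw [← Function.iterate_succ_apply]; exact hv
      exact le_of_lt (lt_of_lt_of_le h1 (ih (out v) h2))

lemma no_cycle {r : V} {out : V → V} (hroot : out r = r)
    {k : V} (hkr : k ≠ r) (hreach : ∀ v, ∃ n, out^[n] v = r) :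
    ∀ n : ℕ, out^[n + 1] k ≠ k := by
  intro n hcyc
  obtain ⟨N, hN⟩ := hreach k
  have per : ∀ m : ℕ, out^[(n + 1) * m] k = k := by
    intro m
    induction m with
    | zero => simp
    | succ m ih =>
      have : (n + 1) * (m + 1) = (n + 1) * m + (n + 1) := by ring
      rw [this, Function.iterate_add_apply, hcyc, ih]
  have h1 : out^[(n + 1) * N] k = k := per N
  have h2 : out^[(n + 1) * N] k = r := by
    have : (n + 1) * N = n * N + N := by ring
    rw [this, Function.iterate_add_apply, hN, Function.iterate_fixed hroot]
  exact hkr (h1 ▸ h2 ▸ rfl)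


lemma transfer
    (r : V) (out : V → V) (hroot : out r = r)
    (hreach : ∀ v, ∃ n, out^[n] v = r)
    (O : V ≃ Fin (Fintype.card V))
    (hO : ∀ u, u ≠ r → (O u : ℕ) < (O (out u) : ℕ))
    (k : V) (Child Sup Rt : Finset V)
    (hChild : ∀ v, v ∈ Child ↔ ∃ n, out^[n] v = k)
    (hSup : ∀ v, v ∈ Sup ↔ (O k : ℕ) < (O v : ℕ))
    (hnn : ∀ x w, 0 ≤ q x w)
    (qm : Finset V → Finset V → (∀ v, X v) → (∀ v, W v) → ℝ)
    (hqm : ∀ A B x w, qm A B x w =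
      ∑ y : ∀ v, X v, ∑ z : ∀ v, W v,
        if (∀ v ∈ A, y v = x v) ∧ (∀ v ∈ B, z v = w v) then q y z else 0)
    (hMP : ∀ x w, qm Finset.univ ∅ x w * ∏ u ∈ Finset.univ.erase r, qm {out u} ∅ x w
      = qm {r} ∅ x w * ∏ u ∈ Finset.univ.erase r, qm {u, out u} ∅ x w)
    (hCI : ∀ x w, qm Finset.univ ∅ x w * qm Childᶜ Rt x w
      = qm Finset.univ Rt x w * qm Childᶜ ∅ x w)
    (hk : k ∈ Child)
    (a a' a'' : ∀ v : {v // v ∈ Child}, X v)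
    (hsame : a ⟨k, hk⟩ = a' ⟨k, hk⟩)
    (hposa' : 0 < pC X W q Child a')
    (hnadj : ¬ Adj1 X W f q Child Sup Rt a a')
    (hAdj : Adj1 X W f q Child Sup Rt a a'') :
    Adj1 X W f q Child Sup Rt a' a'' := by
  obtain ⟨x, x'', w, w'', hxa, hx''a'', hSupEq, hRtEq, hqx, hqx'', hf⟩ := hAdj
  obtain ⟨ya, za, hya, hqya⟩ := exists_witness_of_pC_pos X W q hnn hposa'
  set x' : ∀ v, X v := fun v => if h : v ∈ Child then a' ⟨v, h⟩ else x v with hx'def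
  have hx'in : ∀ v, (h : v ∈ Child) → x' v = a' ⟨v, h⟩ := fun v h => dif_pos h
  have hx'out : ∀ v, v ∉ Child → x' v = x v := fun v h => dif_neg h
  have F2 : ∀ v, out v ∈ Child → v ∈ Child := by
    intro v hv
    obtain ⟨n, hn⟩ := (hChild (out v)).mp hv
    exact (hChild v).mpr ⟨n + 1, by rw [Function.iterate_succ_apply]; exact hn⟩
  have hChildNotSup : ∀ v ∈ Child, v ∉ Sup := by
    intro v hv hvs
    obtain ⟨n, hn⟩ := (hChild v).mp hv
    exact absurd ((hSup v).mp hvs) (not_lt.mpr (child_ord hroot O hO n v hn))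
  have hSupNotChild : ∀ v ∈ Sup, v ∉ Child := fun v hv hc => hChildNotSup v hc hv
  have hx'k : x' k = x k := by rw [hx'in k hk, ← hsame, hxa k hk]
  have hxuniv : 0 < qm Finset.univ ∅ x' w := by
    have hE := hMP x' w
    have hrhs : 0 < qm {r} ∅ x' w
        * ∏ u ∈ Finset.univ.erase r, qm {u, out u} ∅ x' w := by
      apply mul_pos
      · by_cases hrc : r ∈ Child
        · refine qm_pos_of_witness X W q hnn qm hqm (y := ya) (z := za) ?_
            (by intro v hv; simp at hv) hqya
          intro v hv
          rw [Finset.mem_singleton] at hv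
          rw [hv, hya r hrc, hx'in r hrc]
        · refine qm_pos_of_witness X W q hnn qm hqm (y := x) (z := w) ?_
            (by intro v hv; simp at hv) hqx
          intro v hv
          rw [Finset.mem_singleton] at hv
          rw [hv]; exact (hx'out r hrc).symm
      · apply Finset.prod_pos
        intro u hu
        have hur : u ≠ r := (Finset.mem_erase.mp hu).1
        by_cases huc : u ∈ Child
        · by_cases huk : u = k
          · subst huk
            have hok : out u ∉ Child := by
              intro hoc
              obtain ⟨n, hn⟩ := (hChild (out u)).mp hoc
              exact no_cycle hroot hur hreach n
                (by rw [Function.iterate_succ_apply]; exact hn)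
            refine qm_pos_of_witness X W q hnn qm hqm (y := x) (z := w) ?_
              (by intro v hv; simp at hv) hqx
            intro v hv
            rw [Finset.mem_insert, Finset.mem_singleton] at hv
            rcases hv with hv | hv
            · rw [hv]; exact hx'k.symm
            · rw [hv]; exact (hx'out _ hok).symm
          · have hoc : out u ∈ Child := by
              obtain ⟨n, hn⟩ := (hChild u).mp huc
              cases n with
              | zero => exact absurd hn huk
              | succ m => exact (hChild (out u)).mpr ⟨m, by rw [← Function.iterate_succ_apply]; exact hn⟩
            refine qm_pos_of_witness X W q hnn qm hqm (y := ya) (z := za) ?_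
              (by intro v hv; simp at hv) hqya
            intro v hv
            rw [Finset.mem_insert, Finset.mem_singleton] at hv
            rcases hv with hv | hv
            · rw [hv, hya u huc, hx'in u huc]
            · rw [hv, hya _ hoc, hx'in _ hoc]
        · have hoc : out u ∉ Child := fun h => huc (F2 u h)
          refine qm_pos_of_witness X W q hnn qm hqm (y := x) (z := w) ?_
            (by intro v hv; simp at hv) hqx
          intro v hv
          rw [Finset.mem_insert, Finset.mem_singleton] at hv
          rcases hv with hv | hv
          · rw [hv]; exact (hx'out _ huc).symm
          · rw [hv]; exact (hx'out _ hoc).symm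
    rw [← hE] at hrhs
    rcases mul_pos_iff.mp hrhs with ⟨h1, _⟩ | ⟨h1, _⟩
    · exact h1
    · exact absurd h1 (not_lt.mpr (qm_nonneg X W q hnn qm hqm _ _ _ _))
  have hlhs : 0 < qm Finset.univ ∅ x' w * qm Childᶜ Rt x' w := by
    apply mul_pos hxuniv
    refine qm_pos_of_witness X W q hnn qm hqm (y := x) (z := w) ?_
      (fun v _ => rfl) hqx
    intro v hv
    exact (hx'out v (Finset.mem_compl.mp hv)).symm
  rw [hCI x' w] at hlhs
  have huRt : 0 < qm Finset.univ Rt x' w := by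
    rcases mul_pos_iff.mp hlhs with ⟨h1, _⟩ | ⟨h1, _⟩
    · exact h1
    · exact absurd h1 (not_lt.mpr (qm_nonneg X W q hnn qm hqm _ _ _ _))
  obtain ⟨y, w', hyx', hw'w, hqy⟩ :=
    exists_witness_of_qm_pos X W q hnn qm hqm huRt
  have hyeq : y = x' := funext fun v => hyx' v (Finset.mem_univ v)
  rw [hyeq] at hqy
  have hfx : f x = f x' := by
    by_contra hne
    exact hnadj ⟨x, x', w, w', hxa, hx'in,
      fun v hv => (hx'out v (hSupNotChild v hv)).symm,
      fun v hv => (hw'w v hv).symm, hqx, hqy, hne⟩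
  exact ⟨x', x'', w', w'', hx'in, hx''a'',
    fun v hv => by rw [hx'out v (hSupNotChild v hv)]; exact hSupEq v hv,
    fun v hv => by rw [hw'w v hv]; exact hRtEq v hv,
    hqy, hqx'', by rw [← hfx]; exact hf⟩


/-- Claim 8 (non-adjacency transfer): under the Markov Property and the Markov chain
`X_{Child(k)} − X_{Child(k)^c} − W_{Roots(k)}`, if two positive-probability vertices of
`G := G_{X_{Child(k)} | X_{Sup(k)}, W_{Roots(k)}}` agreeing in the `k`-th coordinate are
non-adjacent, then they are adjacent to any third positive-probability vertex
simultaneously. -/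
theorem stmt15
    (r : V) (out : V → V) (hroot : out r = r)
    (hreach : ∀ v, ∃ n, out^[n] v = r)
    (O : V ≃ Fin (Fintype.card V))
    (hO : ∀ u, u ≠ r → (O u : ℕ) < (O (out u) : ℕ))
    (k : V)
    (Child Sup Rt : Finset V)
    (hChild : ∀ v, v ∈ Child ↔ ∃ n, out^[n] v = k)
    (hSup : ∀ v, v ∈ Sup ↔ (O k : ℕ) < (O v : ℕ))
    (hRt : ∀ v, v ∈ Rt ↔ ((O v : ℕ) < (O k : ℕ) ∧
      out v ≠ k ∧ ¬ ((O (out v) : ℕ) < (O k : ℕ))))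
    (hnn : ∀ x w, 0 ≤ q x w) (hsum : ∑ x, ∑ w, q x w = 1)
    (qm : Finset V → Finset V → (∀ v, X v) → (∀ v, W v) → ℝ)
    (hqm : ∀ A B x w, qm A B x w =
      ∑ y : ∀ v, X v, ∑ z : ∀ v, W v,
        if (∀ v ∈ A, y v = x v) ∧ (∀ v ∈ B, z v = w v) then q y z else 0)
    -- Markov Property of the sources X_V
    (hMP : ∀ x w, qm Finset.univ ∅ x w * ∏ u ∈ Finset.univ.erase r, qm {out u} ∅ x w
      = qm {r} ∅ x w * ∏ u ∈ Finset.univ.erase r, qm {u, out u} ∅ x w)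
    -- X_{Child(k)} − X_{Child(k)^c} − W_{Roots(k)}
    (hCI : ∀ x w, qm Finset.univ ∅ x w * qm Childᶜ Rt x w
      = qm Finset.univ Rt x w * qm Childᶜ ∅ x w)
    (hk : k ∈ Child)
    (a a' a'' : ∀ v : {v // v ∈ Child}, X v)
    -- a and a' agree in coordinate k
    (hsame : a ⟨k, hk⟩ = a' ⟨k, hk⟩)
    (hposa : 0 < pC X W q Child a) (hposa' : 0 < pC X W q Child a')
    (hposa'' : 0 < pC X W q Child a'')
    (hnadj : ¬ Adj1 X W f q Child Sup Rt a a') :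
    (Adj1 X W f q Child Sup Rt a a'' ↔ Adj1 X W f q Child Sup Rt a' a'') := by
  constructor
  · exact transfer X W f q r out hroot hreach O hO k Child Sup Rt hChild hSup hnn
      qm hqm hMP hCI hk a a' a'' hsame hposa' hnadj
  · have hnadj' : ¬ Adj1 X W f q Child Sup Rt a' a :=
      fun h' => hnadj (adj1_swap X W f q h')
    exact transfer X W f q r out hroot hreach O hO k Child Sup Rt hChild hSup hnn
      qm hqm hMP hCI hk a' a a'' hsame.symm hposa hnadj'

end NonAdjTransfer
end

section
/- If (X,Y) ~ p(x,y) on finite alphabets with marginals p_X, p_Y, and (X'^n, Y'^n) is drawn i.i.d. from the product of marginals ∏_i p_X(x'_i)p_Y(y'_i), then for n large enough the probability that (X'^n, Y'^n) is jointly robustly ε-typical satisfies (1−δ(ε))·2^{−n(I(X;Y)+2εH(Y))} ≤ P((X'^n,Y'^n) ∈ A_ε^{(n)}(X,Y)) ≤ 2^{−n(I(X;Y)−2εH(Y))}, where δ(ε) → 0 as ε → 0. -/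
/-!
Under the product of the marginals, a pair sequence has probability `2^{-∑ ι(xᵢ,yᵢ)}` times its
probability under `p`, where `ι = log₂ (p(x,y) / (p(x) p(y)))` is the information density.
Splitting `ι = -log₂ p(y) - (-log₂ p(y|x))` into two nonnegative surprisals, the typical average
lemma puts their sums along a robustly typical sequence within factors `1 ± ε` of `n H(Y)` and
`n H(Y|X)`, so `∑ ι` is within `nε (H(Y) + H(Y|X)) ≤ 2nε H(Y)` of `n I(X;Y)` (Gibbs). Summing over
the typical set gives the upper bound, as its `p`-probability is at most `1`, and the lower bound
with `δ(ε) = ε`, as Chebyshev's inequality for each symbol count makes that probability tend to `1`.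
-/

open Finset

section Typicality

variable {𝓧 𝓨 : Type} [Fintype 𝓧] [Fintype 𝓨] [DecidableEq 𝓧] [DecidableEq 𝓨]
variable (p : 𝓧 → 𝓨 → ℝ)

/-- Empirical joint type of a pair of sequences. -/
noncomputable def emp (n : ℕ) (x : Fin n → 𝓧) (y : Fin n → 𝓨) (a : 𝓧) (b : 𝓨) : ℝ :=
  ((Finset.univ.filter (fun i : Fin n => x i = a ∧ y i = b)).card : ℝ) / n

/-- Robust joint ε-typicality. -/
def JointlyTypical (ε : ℝ) (n : ℕ) (x : Fin n → 𝓧) (y : Fin n → 𝓨) : Prop :=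
  ∀ a b, |emp n x y a b - p a b| ≤ ε * p a b

-- Probability (under the product of the marginals) that an i.i.d. pair of
-- sequences is jointly ε-typical.
open scoped Classical in
noncomputable def Pindep (ε : ℝ) (n : ℕ) : ℝ :=
  ∑ x : Fin n → 𝓧, ∑ y : Fin n → 𝓨,
    if JointlyTypical p ε n x y then
      ∏ i, (∑ b, p (x i) b) * (∑ a, p a (y i))
    else 0

/-- Mutual information `I(X;Y)` in bits. -/
noncomputable def MI : ℝ :=
  ∑ a, ∑ b, p a b * Real.logb 2 (p a b / ((∑ b', p a b') * (∑ a', p a' b)))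

/-- Entropy `H(Y)` in bits. -/
noncomputable def HY : ℝ :=
  -∑ b, (∑ a, p a b) * Real.logb 2 (∑ a, p a b)


open Filter Topology

section RobustTypicality

variable {α : Type*} [DecidableEq α]

lemma abs_sub_natCast_mul {n : ℕ} (hn : 0 < n) (c t : ℝ) : |c - n * t| = n * |c / n - t| := by
  have hn' : (0 : ℝ) < n := Nat.cast_pos.2 hn
  rw [show c - n * t = n * (c / n - t) by field_simp, abs_mul, abs_of_pos hn']

def IsRobustTypical (q : α → ℝ) (ε : ℝ) {n : ℕ} (z : Fin n → α) : Prop :=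
  ∀ a, |(#{i | z i = a} : ℝ) / n - q a| ≤ ε * q a

lemma IsRobustTypical.abs_card_sub_le {q : α → ℝ} {ε : ℝ} {n : ℕ} {z : Fin n → α}
    (h : IsRobustTypical q ε z) (a : α) :
    |(#{i | z i = a} : ℝ) - n * q a| ≤ ε * (n * q a) := by
  rcases n.eq_zero_or_pos with rfl | hn
  · simp
  · rw [abs_sub_natCast_mul hn, mul_left_comm]
    exact mul_le_mul_of_nonneg_left (h a) n.cast_nonneg

lemma IsRobustTypical.apply_ne_zero {q : α → ℝ} {ε : ℝ} {n : ℕ} {z : Fin n → α}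
    (h : IsRobustTypical q ε z) (i : Fin n) : q (z i) ≠ 0 := by
  intro hq
  have hcard : 0 < #{j | z j = z i} := card_pos.2 ⟨i, by simp⟩
  have := h.abs_card_sub_le (z i)
  rw [hq] at this
  simp only [mul_zero, sub_zero, abs_nonpos_iff, Nat.cast_eq_zero] at this
  omega

lemma sum_comp_eq_sum_card_mul [Fintype α] {n : ℕ} (z : Fin n → α) (g : α → ℝ) :
    ∑ i, g (z i) = ∑ a, (#{i | z i = a} : ℝ) * g a := by
  rw [← sum_fiberwise univ z (fun i => g (z i))]
  refine sum_congr rfl fun a _ => ?_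
  rw [sum_congr rfl fun i hi => by rw [(mem_filter.1 hi).2], sum_const, nsmul_eq_mul]

section TypicalAverage

variable [Fintype α] {q : α → ℝ} {ε : ℝ} {n : ℕ} {z : Fin n → α} {g : α → ℝ}

lemma IsRobustTypical.sum_le (h : IsRobustTypical q ε z) (hg : ∀ a, 0 ≤ g a) :
    ∑ i, g (z i) ≤ (1 + ε) * n * ∑ a, q a * g a := by
  rw [sum_comp_eq_sum_card_mul, mul_sum]
  refine sum_le_sum fun a _ => ?_
  have := (abs_le.1 (h.abs_card_sub_le a)).2
  nlinarith [hg a]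

lemma IsRobustTypical.le_sum (h : IsRobustTypical q ε z) (hg : ∀ a, 0 ≤ g a) :
    (1 - ε) * n * ∑ a, q a * g a ≤ ∑ i, g (z i) := by
  rw [sum_comp_eq_sum_card_mul, mul_sum]
  refine sum_le_sum fun a _ => ?_
  have := (abs_le.1 (h.abs_card_sub_le a)).1
  nlinarith [hg a]

end TypicalAverage

end RobustTypicality

section IidSums

variable {α : Type*} [Fintype α] {q f : α → ℝ}

lemma sum_prod_eq_one (hq : ∑ a, q a = 1) (n : ℕ) : ∑ z : Fin n → α, ∏ i, q (z i) = 1 := by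
  rw [← Fintype.prod_sum]
  simp [hq]

lemma sum_mul_mul_prod (hq : ∑ a, q a = 1) (hf : ∑ a, q a * f a = 0) {n : ℕ} (i j : Fin n) :
    ∑ z : Fin n → α, f (z i) * f (z j) * ∏ k, q (z k) =
      if i = j then ∑ a, q a * f a ^ 2 else 0 := by
  set h : Fin n → α → ℝ := fun k a => q a * (if k = i then f a else 1) * (if k = j then f a else 1)
  have hprod : ∀ z : Fin n → α, f (z i) * f (z j) * ∏ k, q (z k) = ∏ k, h k (z k) := by
    intro z
    simp only [h, prod_mul_distrib, Fintype.prod_ite_eq']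
    ring
  rw [sum_congr rfl fun z _ => hprod z, ← Fintype.prod_sum]
  split_ifs with hij
  · subst hij
    rw [prod_eq_single i (fun k _ hk => by simp [h, hk, hq]) (by simp)]
    simp [h, sq, mul_assoc]
  · exact prod_eq_zero (mem_univ i) (by simp [h, hij, hf])

lemma sum_sq_sum_mul_prod (hq : ∑ a, q a = 1) (hf : ∑ a, q a * f a = 0) (n : ℕ) :
    ∑ z : Fin n → α, (∑ i, f (z i)) ^ 2 * ∏ k, q (z k) = n * ∑ a, q a * f a ^ 2 := by
  calc ∑ z : Fin n → α, (∑ i, f (z i)) ^ 2 * ∏ k, q (z k)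
      = ∑ i, ∑ j, ∑ z : Fin n → α, f (z i) * f (z j) * ∏ k, q (z k) := by
        simp only [sq, sum_mul_sum]
        simp only [sum_mul]
        rw [sum_comm]
        exact sum_congr rfl fun i _ => sum_comm
    _ = n * ∑ a, q a * f a ^ 2 := by simp [sum_mul_mul_prod hq hf]

end IidSums

lemma ite_forall_le_sum_ite {ι : Type*} [Fintype ι] {P : ι → Prop} [DecidablePred P]
    [Decidable (∀ i, P i)] {w : ℝ} (hw : 0 ≤ w) :
    (if ∀ i, P i then 0 else w) ≤ ∑ i, if P i then 0 else w := by
  have hterm : ∀ i, 0 ≤ if P i then 0 else w := fun i => by split_ifs <;> simp [hw]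
  split_ifs with h
  · exact sum_nonneg fun i _ => hterm i
  · obtain ⟨i, hi⟩ := not_forall.1 h
    exact (if_neg hi).symm.trans_le
      (single_le_sum (f := fun i => if P i then 0 else w) (fun i _ => hterm i) (mem_univ i))

section WeakLaw

variable {α : Type*} [Fintype α] [DecidableEq α] {q : α → ℝ}

lemma sum_indicator_sub_sq (a : α) (hq : ∑ b, q b = 1) :
    ∑ b, q b * ((if b = a then 1 else 0) - q a) ^ 2 = q a * (1 - q a) := by
  have hsplit : ∀ b, q b * ((if b = a then 1 else 0) - q a) ^ 2 =
      (if b = a then q a * (1 - 2 * q a) else 0) + q b * q a ^ 2 := by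
    intro b
    split_ifs with hb
    · subst hb; ring
    · ring
  simp only [hsplit, sum_add_distrib, sum_ite_eq', mem_univ, if_true, ← sum_mul, hq]
  ring

lemma sum_sq_card_sub_mul_prod (hq : ∑ b, q b = 1) (a : α) (n : ℕ) :
    ∑ z : Fin n → α, ((#{i | z i = a} : ℝ) - n * q a) ^ 2 * ∏ i, q (z i) =
      n * (q a * (1 - q a)) := by
  set f : α → ℝ := fun b => (if b = a then 1 else 0) - q a
  have hf : ∑ b, q b * f b = 0 := by simp [f, mul_sub, ← sum_mul, hq]
  have hsum_f : ∀ z : Fin n → α, ∑ i, f (z i) = #{i | z i = a} - n * q a := by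
    simp [f, sum_sub_distrib, sum_boole]
  simp only [← hsum_f, sum_sq_sum_mul_prod hq hf]
  rw [← sum_indicator_sub_sq a hq]

lemma sum_ite_abs_div_sub_le (hq0 : ∀ a, 0 ≤ q a) (hq : ∑ a, q a = 1) {ε : ℝ} (hε : 0 < ε)
    {n : ℕ} (hn : 0 < n) (a : α) :
    ∑ z : Fin n → α,
        (if |(#{i | z i = a} : ℝ) / n - q a| ≤ ε * q a then 0 else ∏ i, q (z i)) ≤
      (ε ^ 2 * q a)⁻¹ / n := by
  have hw : ∀ z : Fin n → α, 0 ≤ ∏ i, q (z i) := fun z => prod_nonneg fun i _ => hq0 (z i)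
  have hn' : (0 : ℝ) < n := Nat.cast_pos.2 hn
  rcases (hq0 a).eq_or_lt with hqa | hqa
  · -- a sequence containing a symbol of mass zero has weight zero
    refine (sum_eq_zero fun z _ => ?_).le.trans (by simp [← hqa])
    split_ifs with h
    · rfl
    · have hcard : #{i | z i = a} ≠ 0 := by
        intro h0
        simp [h0, ← hqa] at h
      obtain ⟨i, hi⟩ := card_ne_zero.1 hcard
      exact prod_eq_zero (mem_univ i) (by rw [(mem_filter.1 hi).2, hqa])
  · have hchebyshev : ∀ z : Fin n → α,
        (n * ε * q a) ^ 2 *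
          (if |(#{i | z i = a} : ℝ) / n - q a| ≤ ε * q a then 0 else ∏ i, q (z i)) ≤
        ((#{i | z i = a} : ℝ) - n * q a) ^ 2 * ∏ i, q (z i) := by
      intro z
      split_ifs with h
      · simpa using mul_nonneg (sq_nonneg _) (hw z)
      · have hlt : n * ε * q a ≤ |(#{i | z i = a} : ℝ) - n * q a| := by
          rw [abs_sub_natCast_mul hn, mul_assoc]
          exact mul_le_mul_of_nonneg_left (not_le.1 h).le hn'.le
        exact mul_le_mul_of_nonneg_right
          ((pow_le_pow_left₀ (by positivity) hlt 2).trans (sq_abs _).le) (hw z)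
    have htotal := calc
      (n * ε * q a) ^ 2 * ∑ z : Fin n → α,
          (if |(#{i | z i = a} : ℝ) / n - q a| ≤ ε * q a then 0 else ∏ i, q (z i))
        ≤ n * (q a * (1 - q a)) := by
          rw [mul_sum, ← sum_sq_card_sub_mul_prod hq a n]
          exact sum_le_sum fun z _ => hchebyshev z
      _ ≤ n * q a := by nlinarith [mul_nonneg hn'.le (sq_nonneg (q a))]
    rw [← le_div_iff₀' (by positivity)] at htotal
    refine htotal.trans (le_of_eq ?_)
    field_simp

noncomputable instance {ε : ℝ} {n : ℕ} {z : Fin n → α} : Decidable (IsRobustTypical q ε z) :=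
  inferInstanceAs (Decidable (∀ a, |(#{i | z i = a} : ℝ) / n - q a| ≤ ε * q a))

noncomputable def typicalSetProb (r q : α → ℝ) (ε : ℝ) (n : ℕ) : ℝ :=
  ∑ z : Fin n → α, if IsRobustTypical q ε z then ∏ i, r (z i) else 0

lemma typicalSetProb_le_one {r : α → ℝ} (hr0 : ∀ a, 0 ≤ r a) (hr : ∑ a, r a = 1) (ε : ℝ)
    (n : ℕ) : typicalSetProb r q ε n ≤ 1 := by
  rw [typicalSetProb, ← sum_prod_eq_one hr n]
  refine sum_le_sum fun z _ => ?_
  split_ifs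
  exacts [le_rfl, prod_nonneg fun i _ => hr0 (z i)]

lemma tendsto_typicalSetProb_self (hq0 : ∀ a, 0 ≤ q a) (hq : ∑ a, q a = 1) {ε : ℝ}
    (hε : 0 < ε) : Tendsto (typicalSetProb q q ε) atTop (𝓝 1) := by
  set C := ∑ a, (ε ^ 2 * q a)⁻¹
  have hlow : ∀ n, 0 < n → 1 - C / n ≤ typicalSetProb q q ε n := by
    intro n hn
    have hsplit : typicalSetProb q q ε n +
        ∑ z : Fin n → α, (if IsRobustTypical q ε z then 0 else ∏ i, q (z i)) = 1 := by
      rw [typicalSetProb, ← sum_add_distrib, ← sum_prod_eq_one hq n]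
      exact sum_congr rfl fun z _ => by split_ifs <;> simp
    have hbad : ∑ z : Fin n → α, (if IsRobustTypical q ε z then 0 else ∏ i, q (z i)) ≤ C / n :=
      calc _ ≤ ∑ z : Fin n → α, ∑ a,
            if |(#{i | z i = a} : ℝ) / n - q a| ≤ ε * q a then 0 else ∏ i, q (z i) :=
            sum_le_sum fun z _ => ite_forall_le_sum_ite (prod_nonneg fun i _ => hq0 (z i))
        _ = ∑ a, ∑ z : Fin n → α,
            if |(#{i | z i = a} : ℝ) / n - q a| ≤ ε * q a then 0 else ∏ i, q (z i) := sum_comm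
        _ ≤ ∑ a, (ε ^ 2 * q a)⁻¹ / n :=
            sum_le_sum fun a _ => sum_ite_abs_div_sub_le hq0 hq hε hn a
        _ = C / n := by rw [sum_div]
    linarith
  refine tendsto_of_tendsto_of_tendsto_of_le_of_le' ?_ tendsto_const_nhds
    (eventually_atTop.2 ⟨1, hlow⟩) (Eventually.of_forall (typicalSetProb_le_one hq0 hq ε))
  simpa using (tendsto_const_div_atTop_nhds_zero_nat C).const_sub 1

lemma mul_typicalSetProb_self_le {r : α → ℝ} {c ε : ℝ} {n : ℕ}
    (h : ∀ z : Fin n → α, IsRobustTypical q ε z → c * ∏ i, q (z i) ≤ ∏ i, r (z i)) :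
    c * typicalSetProb q q ε n ≤ typicalSetProb r q ε n := by
  rw [typicalSetProb, typicalSetProb, mul_sum]
  refine sum_le_sum fun z _ => ?_
  split_ifs with hz
  exacts [h z hz, (mul_zero c).le]

lemma typicalSetProb_le_mul_self {r : α → ℝ} {C ε : ℝ} {n : ℕ}
    (h : ∀ z : Fin n → α, IsRobustTypical q ε z → ∏ i, r (z i) ≤ C * ∏ i, q (z i)) :
    typicalSetProb r q ε n ≤ C * typicalSetProb q q ε n := by
  rw [typicalSetProb, typicalSetProb, mul_sum]
  refine sum_le_sum fun z _ => ?_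
  split_ifs with hz
  exacts [h z hz, (mul_zero C).ge]

end WeakLaw

lemma sub_le_mul_log_div {x y : ℝ} (hx : 0 ≤ x) (hy : 0 ≤ y) (hxy : y = 0 → x = 0) :
    x - y ≤ x * Real.log (x / y) := by
  rcases hx.eq_or_lt with rfl | hx
  · simpa using hy
  · have hy' : 0 < y := hy.lt_of_ne fun h => hx.ne' (hxy h.symm)
    have := Real.one_sub_inv_le_log_of_pos (div_pos hx hy')
    rw [inv_div] at this
    calc x - y = x * (1 - y / x) := by field_simp
      _ ≤ x * Real.log (x / y) := mul_le_mul_of_nonneg_left this hx.le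

lemma sum_mul_log_div_nonneg {ι : Type*} [Fintype ι] {f g : ι → ℝ} (hf : ∀ i, 0 ≤ f i)
    (hg : ∀ i, 0 ≤ g i) (hfg : ∀ i, g i = 0 → f i = 0) (hsum : ∑ i, g i ≤ ∑ i, f i) :
    0 ≤ ∑ i, f i * Real.log (f i / g i) :=
  calc 0 ≤ ∑ i, (f i - g i) := by rw [sum_sub_distrib]; linarith
    _ ≤ _ := sum_le_sum fun i _ => sub_le_mul_log_div (hf i) (hg i) (hfg i)

section Information

omit [DecidableEq 𝓧] [DecidableEq 𝓨]

noncomputable def infoDensity (z : 𝓧 × 𝓨) : ℝ :=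
  Real.logb 2 (p z.1 z.2 / ((∑ b, p z.1 b) * ∑ a, p a z.2))

noncomputable def condSurprisal (z : 𝓧 × 𝓨) : ℝ :=
  -Real.logb 2 (p z.1 z.2 / ∑ b, p z.1 b)

noncomputable def surprisalY (z : 𝓧 × 𝓨) : ℝ :=
  -Real.logb 2 (∑ a, p a z.2)

noncomputable def condEntropy : ℝ :=
  ∑ z, Function.uncurry p z * condSurprisal p z

lemma MI_eq_sum_mul_infoDensity : MI p = ∑ z, Function.uncurry p z * infoDensity p z :=
  (Fintype.sum_prod_type' _).symm

lemma sum_mul_surprisalY : ∑ z, Function.uncurry p z * surprisalY p z = HY p := by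
  rw [HY, Fintype.sum_prod_type, sum_comm, ← sum_neg_distrib]
  refine sum_congr rfl fun b _ => ?_
  rw [sum_mul, ← sum_neg_distrib]
  simp [surprisalY]

variable {p}

omit [Fintype 𝓧] in
lemma condSurprisal_nonneg (hnn : ∀ a b, 0 ≤ p a b) (z : 𝓧 × 𝓨) : 0 ≤ condSurprisal p z :=
  neg_nonneg.2 <| Real.logb_nonpos one_lt_two
    (div_nonneg (hnn _ _) (sum_nonneg fun b _ => hnn _ b))
    (div_le_one_of_le₀ (single_le_sum (fun b _ => hnn _ b) (mem_univ _)) (sum_nonneg fun b _ => hnn _ b))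

lemma surprisalY_nonneg (hnn : ∀ a b, 0 ≤ p a b) (hsum : ∑ a, ∑ b, p a b = 1) (z : 𝓧 × 𝓨) :
    0 ≤ surprisalY p z := by
  refine neg_nonneg.2 <| Real.logb_nonpos one_lt_two (sum_nonneg fun a _ => hnn a _) ?_
  rw [← hsum, sum_comm]
  exact single_le_sum (f := fun b => ∑ a, p a b)
    (fun b _ => sum_nonneg fun a _ => hnn a b) (mem_univ z.2)

lemma infoDensity_eq (hnn : ∀ a b, 0 ≤ p a b) {z : 𝓧 × 𝓨} (hz : 0 < p z.1 z.2) :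
    infoDensity p z = surprisalY p z - condSurprisal p z := by
  have hX := hz.trans_le (single_le_sum (fun b _ => hnn z.1 b) (mem_univ z.2))
  have hY := hz.trans_le (single_le_sum (fun a _ => hnn a z.2) (mem_univ z.1))
  rw [infoDensity, surprisalY, condSurprisal, div_mul_eq_div_div,
    Real.logb_div (div_pos hz hX).ne' hY.ne']
  ring

lemma MI_eq_HY_sub_condEntropy (hnn : ∀ a b, 0 ≤ p a b) : MI p = HY p - condEntropy p := by
  rw [MI_eq_sum_mul_infoDensity, ← sum_mul_surprisalY, condEntropy, ← sum_sub_distrib]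
  refine sum_congr rfl fun z _ => ?_
  rcases (hnn z.1 z.2).eq_or_lt with hz | hz
  · simp [Function.uncurry, ← hz]
  · rw [infoDensity_eq hnn hz, mul_sub]

lemma MI_nonneg (hnn : ∀ a b, 0 ≤ p a b) (hsum : ∑ a, ∑ b, p a b = 1) : 0 ≤ MI p := by
  have hX : ∀ a, 0 ≤ ∑ b, p a b := fun a => sum_nonneg fun b _ => hnn a b
  have hY : ∀ b, 0 ≤ ∑ a, p a b := fun b => sum_nonneg fun a _ => hnn a b
  have hgibbs := sum_mul_log_div_nonneg (f := Function.uncurry p)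
    (g := fun z => (∑ b, p z.1 b) * ∑ a, p a z.2) (fun z => hnn z.1 z.2)
    (fun z => mul_nonneg (hX z.1) (hY z.2)) ?_ ?_
  · rw [MI_eq_sum_mul_infoDensity]
    simp only [infoDensity, Real.logb, ← mul_div_assoc, ← sum_div]
    exact div_nonneg hgibbs (Real.log_nonneg one_le_two)
  · intro z hz
    rcases mul_eq_zero.1 hz with h | h
    · exact le_antisymm (h ▸ single_le_sum (fun b _ => hnn z.1 b) (mem_univ z.2)) (hnn z.1 z.2)
    · exact le_antisymm (h ▸ single_le_sum (fun a _ => hnn a z.2) (mem_univ z.1)) (hnn z.1 z.2)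
  · have hY1 : ∑ b, ∑ a, p a b = 1 := by rw [sum_comm, hsum]
    simp only [Fintype.sum_prod_type, Function.uncurry_apply_pair, ← sum_mul_sum, hsum, hY1,
      one_mul, le_refl]

lemma condEntropy_le_HY (hnn : ∀ a b, 0 ≤ p a b) (hsum : ∑ a, ∑ b, p a b = 1) :
    condEntropy p ≤ HY p := by
  linarith [MI_nonneg hnn hsum, MI_eq_HY_sub_condEntropy hnn]

end Information

lemma prod_eq_rpow_neg_sum_logb_mul_prod {ι : Type*} (s : Finset ι) {f g : ι → ℝ}
    (hf : ∀ i ∈ s, 0 < f i) (hg : ∀ i ∈ s, 0 < g i) :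
    ∏ i ∈ s, g i = 2 ^ (-∑ i ∈ s, Real.logb 2 (f i / g i)) * ∏ i ∈ s, f i := by
  rw [← sum_neg_distrib, Real.rpow_sum_of_pos two_pos, ← prod_mul_distrib]
  refine prod_congr rfl fun i hi => ?_
  rw [← Real.logb_inv, inv_div, Real.rpow_logb two_pos (by norm_num) (div_pos (hg i hi) (hf i hi)),
    div_mul_cancel₀ _ (hf i hi).ne']

section TypicalSequences

variable {p} {ε : ℝ} {n : ℕ} {z : Fin n → 𝓧 × 𝓨}

omit [Fintype 𝓧] [Fintype 𝓨] in
lemma IsRobustTypical.apply_pos (hnn : ∀ a b, 0 ≤ p a b)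
    (h : IsRobustTypical (Function.uncurry p) ε z) (i : Fin n) : 0 < p (z i).1 (z i).2 :=
  (hnn _ _).lt_of_ne' (h.apply_ne_zero i)

lemma IsRobustTypical.sum_infoDensity_eq (hnn : ∀ a b, 0 ≤ p a b)
    (h : IsRobustTypical (Function.uncurry p) ε z) :
    ∑ i, infoDensity p (z i) = ∑ i, surprisalY p (z i) - ∑ i, condSurprisal p (z i) := by
  rw [← sum_sub_distrib]
  exact sum_congr rfl fun i _ => infoDensity_eq hnn (h.apply_pos hnn i)

lemma IsRobustTypical.sum_infoDensity_le (hnn : ∀ a b, 0 ≤ p a b)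
    (hsum : ∑ a, ∑ b, p a b = 1) (hε : 0 ≤ ε) (h : IsRobustTypical (Function.uncurry p) ε z) :
    ∑ i, infoDensity p (z i) ≤ n * (MI p + 2 * ε * HY p) := by
  have hY := h.sum_le (surprisalY_nonneg hnn hsum)
  have hYX := h.le_sum (condSurprisal_nonneg hnn)
  rw [sum_mul_surprisalY] at hY
  rw [← condEntropy] at hYX
  rw [h.sum_infoDensity_eq hnn, MI_eq_HY_sub_condEntropy hnn]
  nlinarith [mul_nonneg (mul_nonneg hε n.cast_nonneg) (sub_nonneg.2 (condEntropy_le_HY hnn hsum))]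

lemma IsRobustTypical.le_sum_infoDensity (hnn : ∀ a b, 0 ≤ p a b)
    (hsum : ∑ a, ∑ b, p a b = 1) (hε : 0 ≤ ε) (h : IsRobustTypical (Function.uncurry p) ε z) :
    n * (MI p - 2 * ε * HY p) ≤ ∑ i, infoDensity p (z i) := by
  have hY := h.le_sum (surprisalY_nonneg hnn hsum)
  have hYX := h.sum_le (condSurprisal_nonneg hnn)
  rw [sum_mul_surprisalY] at hY
  rw [← condEntropy] at hYX
  rw [h.sum_infoDensity_eq hnn, MI_eq_HY_sub_condEntropy hnn]
  nlinarith [mul_nonneg (mul_nonneg hε n.cast_nonneg) (sub_nonneg.2 (condEntropy_le_HY hnn hsum))]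

lemma IsRobustTypical.prod_marginals_eq (hnn : ∀ a b, 0 ≤ p a b)
    (h : IsRobustTypical (Function.uncurry p) ε z) :
    ∏ i, (∑ b, p (z i).1 b) * ∑ a, p a (z i).2 =
      2 ^ (-∑ i, infoDensity p (z i)) * ∏ i, p (z i).1 (z i).2 := by
  refine prod_eq_rpow_neg_sum_logb_mul_prod univ (fun i _ => h.apply_pos hnn i) fun i _ => ?_
  have hi := h.apply_pos hnn i
  exact mul_pos (hi.trans_le (single_le_sum (fun b _ => hnn _ b) (mem_univ _)))
    (hi.trans_le (single_le_sum (fun a _ => hnn a _) (mem_univ _)))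

lemma IsRobustTypical.rpow_mul_prod_le_prod_marginals (hnn : ∀ a b, 0 ≤ p a b)
    (hsum : ∑ a, ∑ b, p a b = 1) (hε : 0 ≤ ε) (h : IsRobustTypical (Function.uncurry p) ε z) :
    2 ^ (-(n : ℝ) * (MI p + 2 * ε * HY p)) * ∏ i, Function.uncurry p (z i) ≤
      ∏ i, (∑ b, p (z i).1 b) * ∑ a, p a (z i).2 := by
  rw [h.prod_marginals_eq hnn, neg_mul]
  exact mul_le_mul_of_nonneg_right (Real.rpow_le_rpow_of_exponent_le one_le_two
    (neg_le_neg (h.sum_infoDensity_le hnn hsum hε))) (prod_nonneg fun i _ => hnn _ _)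

lemma IsRobustTypical.prod_marginals_le_rpow_mul (hnn : ∀ a b, 0 ≤ p a b)
    (hsum : ∑ a, ∑ b, p a b = 1) (hε : 0 ≤ ε) (h : IsRobustTypical (Function.uncurry p) ε z) :
    ∏ i, (∑ b, p (z i).1 b) * ∑ a, p a (z i).2 ≤
      2 ^ (-(n : ℝ) * (MI p - 2 * ε * HY p)) * ∏ i, Function.uncurry p (z i) := by
  rw [h.prod_marginals_eq hnn, neg_mul]
  exact mul_le_mul_of_nonneg_right (Real.rpow_le_rpow_of_exponent_le one_le_two
    (neg_le_neg (h.le_sum_infoDensity hnn hsum hε))) (prod_nonneg fun i _ => hnn _ _)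

end TypicalSequences

omit [Fintype 𝓧] [Fintype 𝓨] in
lemma jointlyTypical_iff {ε : ℝ} {n : ℕ} {x : Fin n → 𝓧} {y : Fin n → 𝓨} :
    JointlyTypical p ε n x y ↔ IsRobustTypical (Function.uncurry p) ε (fun i => (x i, y i)) := by
  simp [JointlyTypical, IsRobustTypical, emp, Prod.forall]

lemma Pindep_eq_typicalSetProb (ε : ℝ) (n : ℕ) :
    Pindep p ε n =
      typicalSetProb (fun z => (∑ b, p z.1 b) * ∑ a, p a z.2) (Function.uncurry p) ε n := by
  rw [Pindep, typicalSetProb, ← Fintype.sum_prod_type',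
    ← (Equiv.arrowProdEquivProdArrow _ _ _).sum_comp]
  refine sum_congr rfl fun z _ => ?_
  classical
  exact if_congr (jointlyTypical_iff p) rfl rfl

/-- Lemma 9: if `(X'^n, Y'^n)` is drawn i.i.d. from the product of the marginals of
`p`, then for `n` large enough,
`(1−δ(ε))·2^{−n(I(X;Y)+2εH(Y))} ≤ P((X'^n,Y'^n) ∈ A_ε^{(n)}) ≤ 2^{−n(I(X;Y)−2εH(Y))}`,
where `δ(ε) → 0` as `ε → 0`. -/
theorem stmt16
    (hnn : ∀ a b, 0 ≤ p a b) (hsum : ∑ a, ∑ b, p a b = 1) :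
    ∃ δ : ℝ → ℝ,
      Filter.Tendsto δ (nhdsWithin 0 (Set.Ioi 0)) (nhds 0) ∧
      ∀ ε : ℝ, 0 < ε → ∃ N : ℕ, ∀ n ≥ N,
        (1 - δ ε) * (2 : ℝ) ^ (-(n : ℝ) * (MI p + 2 * ε * HY p)) ≤ Pindep p ε n ∧
        Pindep p ε n ≤ (2 : ℝ) ^ (-(n : ℝ) * (MI p - 2 * ε * HY p)) := by
  refine ⟨id, tendsto_id.mono_left nhdsWithin_le_nhds, fun ε hε => ?_⟩
  have hq0 : ∀ z : 𝓧 × 𝓨, 0 ≤ Function.uncurry p z := fun z => hnn z.1 z.2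
  have hq : ∑ z, Function.uncurry p z = 1 := by rw [Fintype.sum_prod_type]; exact hsum
  obtain ⟨N, hN⟩ := eventually_atTop.1 ((tendsto_typicalSetProb_self hq0 hq hε).eventually
    (eventually_ge_nhds (sub_lt_self 1 hε)))
  refine ⟨N, fun n hn => ⟨?_, ?_⟩⟩ <;> rw [Pindep_eq_typicalSetProb]
  · rw [mul_comm]
    exact (mul_le_mul_of_nonneg_left (hN n hn) (by positivity)).trans
      (mul_typicalSetProb_self_le fun z hz =>
        hz.rpow_mul_prod_le_prod_marginals hnn hsum hε.le)
  · exact (typicalSetProb_le_mul_self fun z hz =>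
        hz.prod_marginals_le_rpow_mul hnn hsum hε.le).trans
      (mul_le_of_le_one_right (by positivity) (typicalSetProb_le_one hq0 hq ε n))

end Typicality
end
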